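/- Let n ≥ 1 and let f : EuclideanSpace ℝ (Fin n) → ℝ be a twice continuously differentiable function with f ≥ 0 everywhere and Δf ≥ 2·f² everywhere, where Δf(x) = ∑ᵢ D²f(x)(eᵢ, eᵢ) is the Euclidean Laplacian (the trace of the second derivative over an orthonormal basis (eᵢ)). Then f is identically zero. -/

import Mathlib

/-!
Cutoff argument: for `R > 0` the function `g = f · (R² - ‖y - x₀‖²)²` attains its maximum over
the closed ball `closedBall x₀ R` at some `p`, and `g` vanishes on the boundary sphere. At an
interior maximum, restricting `g` to lines through `p` and using `g' = 0`, `g'' ≤ 0` along an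
orthonormal basis, together with `Δf ≥ 2f²`, gives `g p ≤ (12 + 2 dim) R²`. Hence
`f x₀ R⁴ = g x₀ ≤ (12 + 2 dim) R²`, and `f x₀ = 0` on letting `R → ∞`.
-/

open Filter Topology

theorem IsLocalMax.deriv_deriv_nonpos {f : ℝ → ℝ} {x₀ : ℝ} (h : IsLocalMax f x₀)
    (hc : ContinuousAt f x₀) : deriv (deriv f) x₀ ≤ 0 := by
  by_contra! hpos
  -- the second-derivative test would make `x₀` a local minimum too, so `f` is locally constant
  have hmin := isLocalMin_of_deriv_deriv_pos hpos h.deriv_eq_zero hc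
  have hconst : f =ᶠ[𝓝 x₀] fun _ => f x₀ :=
    (hmin.and h).mono fun x hx => le_antisymm hx.2 hx.1
  have hderiv : deriv f =ᶠ[𝓝 x₀] fun _ => 0 :=
    hconst.eventually_nhds.mono fun y hy => by rw [Filter.EventuallyEq.deriv_eq hy, deriv_const]
  rw [hderiv.deriv_eq, deriv_const] at hpos
  exact hpos.false

theorem IsLocalMax.deriv_deriv_mul_sq_le {φ Q : ℝ → ℝ} {x₀ : ℝ}
    (h : IsLocalMax (fun t => φ t * Q t ^ 2) x₀) (hφ : ContDiff ℝ 2 φ) (hQ : ContDiff ℝ 2 Q)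
    (hQ₀ : Q x₀ ≠ 0) :
    deriv (deriv φ) x₀ * Q x₀ ^ 2 ≤
      φ x₀ * (6 * deriv Q x₀ ^ 2 - 2 * Q x₀ * deriv (deriv Q) x₀) := by
  have hφ₁ := hφ.differentiable two_ne_zero
  have hQ₁ := hQ.differentiable two_ne_zero
  have hderiv : deriv (fun t => φ t * Q t ^ 2) =
      fun t => deriv φ t * Q t ^ 2 + φ t * (2 * Q t * deriv Q t) := by
    ext t
    rw [((hφ₁ t).hasDerivAt.fun_mul ((hQ₁ t).hasDerivAt.fun_pow 2)).deriv]
    push_cast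
    ring
  have hfirst : deriv φ x₀ * Q x₀ ^ 2 + φ x₀ * (2 * Q x₀ * deriv Q x₀) = 0 := by
    rw [← congrFun hderiv x₀]
    exact h.deriv_eq_zero
  have hsecond := h.deriv_deriv_nonpos (hφ₁.mul (hQ₁.pow 2)).continuous.continuousAt
  have hφ₂ := (hφ.differentiable_deriv_two x₀).hasDerivAt
  have hQ₂ := (hQ.differentiable_deriv_two x₀).hasDerivAt
  rw [hderiv, ((hφ₂.fun_mul ((hQ₁ x₀).hasDerivAt.fun_pow 2)).fun_add
    ((hφ₁ x₀).hasDerivAt.fun_mul (((hQ₁ x₀).hasDerivAt.const_mul 2).fun_mul hQ₂))).deriv]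
    at hsecond
  refine le_of_sub_nonpos (nonpos_of_mul_nonpos_right ?_ (by positivity : 0 < Q x₀ ^ 2))
  linear_combination hsecond * Q x₀ ^ 2 - 4 * Q x₀ * deriv Q x₀ * hfirst

theorem deriv_deriv_comp_add_smul {E F : Type*} [NormedAddCommGroup E] [NormedSpace ℝ E]
    [NormedAddCommGroup F] [NormedSpace ℝ F] {f : E → F} (hf : ContDiff ℝ 2 f) (p v : E)
    (t : ℝ) :
    deriv (deriv fun s : ℝ => f (p + s • v)) t = iteratedFDeriv ℝ 2 f (p + t • v) ![v, v] := by
  have hcomp : (fun s : ℝ => f (p + s • v)) =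
      (fun y => f (p + y)) ∘ ContinuousLinearMap.toSpanSingleton ℝ v := by
    ext s
    simp
  have hf' : ContDiff ℝ 2 (fun y => f (p + y)) := hf.comp (contDiff_const.add contDiff_id)
  rw [← iteratedDeriv_one (f := deriv _), ← iteratedDeriv_succ', iteratedDeriv_eq_iteratedFDeriv,
    hcomp, show 1 + 1 = 2 from rfl,
    ContinuousLinearMap.iteratedFDeriv_comp_right _ hf' _ le_rfl, iteratedFDeriv_comp_add_left]
  simp only [ContinuousMultilinearMap.compContinuousLinearMap_apply,
    ContinuousLinearMap.toSpanSingleton_apply, one_smul]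
  congr 1
  ext i
  fin_cases i <;> rfl

section InnerProduct

variable {E : Type*} [NormedAddCommGroup E] [InnerProductSpace ℝ E]

open RealInnerProductSpace

theorem norm_add_smul_sub_sq (p x₀ v : E) (t : ℝ) :
    ‖p + t • v - x₀‖ ^ 2 = ‖p - x₀‖ ^ 2 + 2 * ⟪p - x₀, v⟫ * t + ‖v‖ ^ 2 * t ^ 2 := by
  rw [add_sub_right_comm, norm_add_sq_real, inner_smul_right, norm_smul, mul_pow,
    Real.norm_eq_abs, sq_abs]
  ring

theorem IsLocalMax.iteratedFDeriv_two_mul_sq_le {f : E → ℝ} (hf : ContDiff ℝ 2 f) {x₀ p : E}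
    {R : ℝ} (hmax : IsLocalMax (fun y => f y * (R ^ 2 - ‖y - x₀‖ ^ 2) ^ 2) p)
    (hp : R ^ 2 - ‖p - x₀‖ ^ 2 ≠ 0) (v : E) :
    iteratedFDeriv ℝ 2 f p ![v, v] * (R ^ 2 - ‖p - x₀‖ ^ 2) ^ 2 ≤
      f p * (24 * ⟪p - x₀, v⟫ ^ 2 + 4 * (R ^ 2 - ‖p - x₀‖ ^ 2) * ‖v‖ ^ 2) := by
  set s := R ^ 2 - ‖p - x₀‖ ^ 2
  set c := ⟪p - x₀, v⟫
  set Q : ℝ → ℝ := fun t => s - 2 * c * t - ‖v‖ ^ 2 * t ^ 2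
  have hline : (fun t : ℝ => f (p + t • v) * Q t ^ 2) =
      (fun y => f y * (R ^ 2 - ‖y - x₀‖ ^ 2) ^ 2) ∘ fun t : ℝ => p + t • v := by
    ext t
    simp only [Function.comp_apply, norm_add_smul_sub_sq, Q, s, c]
    ring
  have hmax' : IsLocalMax (fun t : ℝ => f (p + t • v) * Q t ^ 2) 0 := by
    rw [hline]
    exact IsLocalMax.comp_continuous (by simpa using hmax) (by fun_prop)
  have hQ₁ : deriv Q = fun t => -(2 * c) - 2 * ‖v‖ ^ 2 * t := by
    ext t
    have := (((hasDerivAt_id t).const_mul (2 * c)).const_sub s).fun_sub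
      ((hasDerivAt_pow 2 t).const_mul (‖v‖ ^ 2))
    exact this.deriv.trans (by push_cast; ring)
  have hQ₂ : deriv (deriv Q) 0 = -(2 * ‖v‖ ^ 2) := by
    rw [hQ₁]
    simp
  have hφ : ContDiff ℝ 2 fun t : ℝ => f (p + t • v) :=
    hf.comp (contDiff_const.add (contDiff_id.smul contDiff_const))
  have key := hmax'.deriv_deriv_mul_sq_le hφ (by fun_prop) (by simpa [Q] using hp)
  rw [deriv_deriv_comp_add_smul hf, hQ₂, hQ₁] at key
  simp only [Q, zero_smul, add_zero, mul_zero, sub_zero, zero_pow two_ne_zero] at key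
  linear_combination key

open Laplacian Module Finset in
theorem IsLocalMax.mul_sq_le_of_two_mul_sq_le_laplacian [FiniteDimensional ℝ E] {f : E → ℝ}
    (hf : ContDiff ℝ 2 f) {x₀ p : E} {R : ℝ}
    (hmax : IsLocalMax (fun y => f y * (R ^ 2 - ‖y - x₀‖ ^ 2) ^ 2) p) (hp : ‖p - x₀‖ < R)
    (hΔ : 2 * f p ^ 2 ≤ Δ f p) :
    f p * (R ^ 2 - ‖p - x₀‖ ^ 2) ^ 2 ≤ (12 + 2 * finrank ℝ E) * R ^ 2 := by
  set b := stdOrthonormalBasis ℝ E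
  set s := R ^ 2 - ‖p - x₀‖ ^ 2
  have hs : 0 < s := sub_pos.2 (pow_lt_pow_left₀ hp (norm_nonneg _) two_ne_zero)
  have hsR : s ≤ R ^ 2 := sub_le_self _ (sq_nonneg _)
  have hsum_sq : ∑ i, ⟪p - x₀, b i⟫ ^ 2 = ‖p - x₀‖ ^ 2 := by
    simpa [Real.norm_eq_abs, sq_abs] using b.sum_sq_norm_inner_left (p - x₀)
  have hsum : Δ f p * s ^ 2 ≤ f p * (24 * ‖p - x₀‖ ^ 2 + 4 * s * finrank ℝ E) := by
    rw [InnerProductSpace.laplacian_eq_iteratedFDeriv_orthonormalBasis f b, sum_mul]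
    calc ∑ i, iteratedFDeriv ℝ 2 f p ![b i, b i] * s ^ 2
        ≤ ∑ i, f p * (24 * ⟪p - x₀, b i⟫ ^ 2 + 4 * s * ‖b i‖ ^ 2) :=
          sum_le_sum fun i _ => hmax.iteratedFDeriv_two_mul_sq_le hf hs.ne' (b i)
      _ = f p * (24 * ‖p - x₀‖ ^ 2 + 4 * s * finrank ℝ E) := by
          simp [b.norm_eq_one, ← mul_sum, sum_add_distrib, hsum_sq, mul_comm]
  rcases le_or_gt (f p) 0 with hfp | hfp
  · exact (mul_nonpos_of_nonpos_of_nonneg hfp (sq_nonneg s)).trans (by positivity)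
  · have ha : ‖p - x₀‖ ^ 2 ≤ R ^ 2 := by linarith
    refine le_of_mul_le_mul_left ?_ (by positivity : 0 < 2 * f p)
    calc 2 * f p * (f p * s ^ 2) = 2 * f p ^ 2 * s ^ 2 := by ring
      _ ≤ Δ f p * s ^ 2 := mul_le_mul_of_nonneg_right hΔ (sq_nonneg s)
      _ ≤ f p * (24 * ‖p - x₀‖ ^ 2 + 4 * s * finrank ℝ E) := hsum
      _ ≤ f p * (24 * R ^ 2 + 4 * R ^ 2 * finrank ℝ E) := by gcongr
      _ = 2 * f p * ((12 + 2 * finrank ℝ E) * R ^ 2) := by ring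

open Laplacian Module Metric in
theorem le_div_sq_of_two_mul_sq_le_laplacian [FiniteDimensional ℝ E] {f : E → ℝ}
    (hf : ContDiff ℝ 2 f) (hΔ : ∀ x, 2 * f x ^ 2 ≤ Δ f x) (x₀ : E) {R : ℝ} (hR : 0 < R) :
    f x₀ ≤ (12 + 2 * finrank ℝ E) / R ^ 2 := by
  set g := fun y => f y * (R ^ 2 - ‖y - x₀‖ ^ 2) ^ 2
  have hg : Continuous g := hf.continuous.mul (by fun_prop)
  obtain ⟨p, hpR, hmax⟩ := (isCompact_closedBall x₀ R).exists_isMaxOn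
    ⟨x₀, mem_closedBall_self hR.le⟩ hg.continuousOn
  have hgp : g p ≤ (12 + 2 * finrank ℝ E) * R ^ 2 := by
    rcases (mem_closedBall_iff_norm.1 hpR).eq_or_lt with hp | hp
    · simp only [g, hp, sub_self, zero_pow two_ne_zero, mul_zero]
      positivity
    · have hloc := hmax.isLocalMax (closedBall_mem_nhds_of_mem (mem_ball_iff_norm.2 hp))
      exact hloc.mul_sq_le_of_two_mul_sq_le_laplacian hf hp (hΔ p)
  have hgx₀ : g x₀ = f x₀ * R ^ 2 * R ^ 2 := by
    simp only [g, sub_self, norm_zero]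
    ring
  rw [le_div_iff₀ (by positivity)]
  refine le_of_mul_le_mul_right ?_ (by positivity : 0 < R ^ 2)
  rw [← hgx₀]
  exact (hmax (mem_closedBall_self hR.le)).trans hgp

open Laplacian Module in
theorem eq_zero_of_nonneg_of_two_mul_sq_le_laplacian [FiniteDimensional ℝ E] {f : E → ℝ}
    (hf : ContDiff ℝ 2 f) (hpos : ∀ x, 0 ≤ f x) (hΔ : ∀ x, 2 * f x ^ 2 ≤ Δ f x) : f = 0 := by
  funext x
  refine le_antisymm ?_ (hpos x)
  have hlim : Tendsto (fun R : ℝ => (12 + 2 * finrank ℝ E) / R ^ 2) atTop (𝓝 0) :=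
    tendsto_const_nhds.div_atTop (tendsto_pow_atTop two_ne_zero)
  exact ge_of_tendsto hlim ((eventually_gt_atTop 0).mono fun R hR =>
    le_div_sq_of_two_mul_sq_le_laplacian hf hΔ x hR)

end InnerProduct

theorem stmt6_general {n : ℕ} (f : EuclideanSpace ℝ (Fin n) → ℝ)
    (hf : ContDiff ℝ 2 f) (hpos : ∀ x, 0 ≤ f x)
    (hineq : ∀ x,
      (∑ i, iteratedFDeriv ℝ 2 f x
        ![EuclideanSpace.basisFun (Fin n) ℝ i, EuclideanSpace.basisFun (Fin n) ℝ i]) ≥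
        2 * f x ^ 2) :
    ∀ x, f x = 0 := by
  refine congrFun (eq_zero_of_nonneg_of_two_mul_sq_le_laplacian hf hpos fun x => ?_)
  rw [InnerProductSpace.laplacian_eq_iteratedFDeriv_orthonormalBasis f
    (EuclideanSpace.basisFun (Fin n) ℝ)]
  exact hineq x

/-- Liouville-type statement: a nonnegative `C²` function `f` on Euclidean space
with `Δf ≥ 2f²` everywhere is identically zero. -/
theorem stmt6 {n : ℕ} (hn : 1 ≤ n) (f : EuclideanSpace ℝ (Fin n) → ℝ)
    (hf : ContDiff ℝ 2 f) (hpos : ∀ x, 0 ≤ f x)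
    (hineq : ∀ x,
      (∑ i, iteratedFDeriv ℝ 2 f x
        ![EuclideanSpace.basisFun (Fin n) ℝ i, EuclideanSpace.basisFun (Fin n) ℝ i]) ≥
        2 * f x ^ 2) :
    ∀ x, f x = 0 :=
  stmt6_general f hf hpos hineq
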